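/- Let k be ℤ or a field, and consider ℤ×ℤ/2-graded chain complexes of free k-modules with differential of bidegree (2, 1̄). Every bounded such complex with free finitely generated terms is isomorphic to a direct sum of complexes of two types: (a) a single copy of k in some bidegree with zero differential, and (b) a two-term complex k⟨a⟩Π^b → k⟨a+2⟩Π^{b+1} with differential given by multiplication by a nonzero scalar d ∈ k. Consequently the Grothendieck group of the homotopy category of such complexes (modulo contractible ones) is ℤ[q,q⁻¹,π]/(π²−1, 1+q²π). -/

import Mathlib

open DirectSum Submodule

/-! Elementary summands are split off one at a time from a graded subcomplex `U`. If some
homogeneous `v ∈ U` has `d v ≠ 0`, take a functional `ψ` with `ψ (d v) = 1` that only sees the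
degree of `d v`; since `d` shifts degrees injectively, `ψ ∘ d` only sees the degree of `v`, so
`U ⊓ ker ψ ⊓ ker (ψ ∘ d)` is again a graded subcomplex, and it is a complement of
`span {v, d v}` in `U`. Otherwise `d` vanishes on `U`, and `span {v}` for any nonzero homogeneous
`v ∈ U` has the graded complement `U ⊓ ker ψ` with `ψ v = 1` concentrated in the degree of `v`.
As `<` on subspaces of a finite-dimensional space is well-founded, induction on `U` concludes. -/

section FinCons

variable {α : Type*} [CompleteLattice α]

theorem iSup_fin_cons {n : ℕ} (a : α) (f : Fin n → α) :
    ⨆ i, (Fin.cons a f : Fin (n + 1) → α) i = a ⊔ ⨆ i, f i := by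
  simp only [← Finset.sup_univ_eq_iSup, Fin.univ_succ, Finset.sup_cons, Fin.cons_zero,
    Finset.sup_map]
  rfl

theorem iSupIndep_fin_cons [IsModularLattice α] {n : ℕ} {a : α} {f : Fin n → α}
    (hf : iSupIndep f) (ha : Disjoint a (⨆ i, f i)) :
    iSupIndep (Fin.cons a f : Fin (n + 1) → α) := by
  rw [iSupIndep_iff_supIndep_univ, Fin.univ_succ, Finset.cons_eq_insert]
  refine Finset.SupIndep.insert ?_ ?_
  · rw [Finset.supIndep_map]
    exact iSupIndep_iff_supIndep_univ.mp hf
  · simpa [Finset.sup_map, Finset.sup_univ_eq_iSup] using ha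

end FinCons

section FinDirectSum

variable {R M : Type*} [Ring R] [AddCommGroup M] [Module R M]

def Submodule.IsFinDirectSum (P : Submodule R M → Prop) (U : Submodule R M) : Prop :=
  ∃ (n : ℕ) (W : Fin n → Submodule R M), iSupIndep W ∧ iSup W = U ∧ ∀ i, P (W i)

namespace Submodule.IsFinDirectSum

variable {P : Submodule R M → Prop}

theorem bot : (⊥ : Submodule R M).IsFinDirectSum P :=
  ⟨0, finZeroElim, iSupIndep_subsingleton _, iSup_of_empty _, finZeroElim⟩

theorem sup {B U : Submodule R M} (hB : P B) (hBU : Disjoint B U) (hU : U.IsFinDirectSum P) :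
    (B ⊔ U).IsFinDirectSum P := by
  obtain ⟨n, W, hW, rfl, hP⟩ := hU
  refine ⟨n + 1, Fin.cons B W, iSupIndep_fin_cons hW hBU, iSup_fin_cons B W, ?_⟩
  exact Fin.cases hB hP

end Submodule.IsFinDirectSum

end FinDirectSum

section Grading

variable {ι R M : Type*} [DecidableEq ι] [Ring R] [AddCommGroup M] [Module R M]
  (ℳ : ι → Submodule R M) [Decomposition ℳ]

def gradedProj (i : ι) : M →ₗ[R] M :=
  (ℳ i).subtype ∘ₗ component R ι (fun i => ℳ i) i ∘ₗ (decomposeLinearEquiv ℳ).toLinearMap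

variable {ℳ}

theorem gradedProj_of_mem {i j : ι} {x : M} (hx : x ∈ ℳ i) :
    gradedProj ℳ j x = if i = j then x else 0 := by
  split_ifs with h
  · subst h; exact decompose_of_mem_same ℳ hx
  · exact decompose_of_mem_ne ℳ hx h

theorem gradedProj_comp_of_injective {σ : ι → ι} (hσ : σ.Injective) {f : M →ₗ[R] M}
    (hf : ∀ i, ∀ x ∈ ℳ i, f x ∈ ℳ (σ i)) (i : ι) :
    gradedProj ℳ (σ i) ∘ₗ f = f ∘ₗ gradedProj ℳ i := by
  refine decompose_lhom_ext ℳ fun j => LinearMap.ext fun ⟨x, hx⟩ => ?_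
  simp only [LinearMap.comp_apply, Submodule.subtype_apply, gradedProj_of_mem hx,
    gradedProj_of_mem (hf j x hx), hσ.eq_iff]
  split_ifs <;> simp

theorem Submodule.IsHomogeneous.inf_ker_comp_gradedProj {N : Type*} [AddCommGroup N] [Module R N]
    {U : Submodule R M} (hU : U.IsHomogeneous ℳ) (f : M →ₗ[R] N) (i : ι) :
    (U ⊓ LinearMap.ker (f ∘ₗ gradedProj ℳ i)).IsHomogeneous ℳ := by
  rintro j x ⟨hxU, hx⟩
  refine ⟨hU j hxU, ?_⟩
  simp only [SetLike.mem_coe, LinearMap.mem_ker, LinearMap.comp_apply] at hx ⊢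
  rw [gradedProj_of_mem (decompose ℳ x j).2]
  split_ifs with h
  · subst h; exact hx
  · exact map_zero f

theorem Submodule.IsHomogeneous.apply_eq_zero_of_forall_homogeneous {N : Type*}
    [AddCommGroup N] [Module R N] {U : Submodule R M} (hU : U.IsHomogeneous ℳ) {f : M →ₗ[R] N}
    (hf : ∀ i, ∀ x ∈ U, x ∈ ℳ i → f x = 0) {u : M} (hu : u ∈ U) : f u = 0 := by
  classical
  rw [← sum_support_decompose ℳ u, map_sum]
  exact Finset.sum_eq_zero fun i _ => hf i _ (hU i hu) (decompose ℳ u i).2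

theorem Submodule.IsHomogeneous.exists_homogeneous_mem_ne_zero {U : Submodule R M}
    (hU : U.IsHomogeneous ℳ) (hne : U ≠ ⊥) : ∃ i, ∃ x ∈ U, x ∈ ℳ i ∧ x ≠ 0 := by
  by_contra! h
  obtain ⟨u, hu, hu0⟩ := Submodule.exists_mem_ne_zero_of_ne_bot hne
  exact hu0 (hU.apply_eq_zero_of_forall_homogeneous (f := LinearMap.id) h hu)

end Grading

section Splitting

variable {k V : Type*} [Field k] [AddCommGroup V] [Module k V] {U : Submodule k V} {v : V}
  {ψ : V →ₗ[k] k}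

theorem Submodule.disjoint_span_singleton_inf_ker (hψ : ψ v ≠ 0) :
    Disjoint (span k {v}) (U ⊓ LinearMap.ker ψ) := by
  refine Disjoint.mono_right inf_le_right ?_
  rw [disjoint_comm, disjoint_span_singleton]
  exact fun h => absurd h hψ

theorem Submodule.span_singleton_sup_inf_ker (hv : v ∈ U) (hψ : ψ v ≠ 0) :
    span k {v} ⊔ (U ⊓ LinearMap.ker ψ) = U := by
  rw [inf_comm, ← sup_inf_assoc_of_le _ ((span_singleton_le_iff_mem v U).mpr hv),
    LinearMap.span_singleton_sup_ker_eq_top ψ hψ, top_inf_eq]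

variable {d : V →ₗ[k] V}

theorem Submodule.disjoint_span_pair_inf_ker (hd : ∀ x, d (d x) = 0) (hψ : ψ (d v) = 1) :
    Disjoint (span k {v, d v}) (U ⊓ LinearMap.ker ψ ⊓ LinearMap.ker (ψ ∘ₗ d)) := by
  rw [disjoint_def]
  intro x hx hx'
  simp only [mem_inf, LinearMap.mem_ker, LinearMap.comp_apply] at hx'
  obtain ⟨⟨-, h0⟩, h1⟩ := hx'
  obtain ⟨a, b, rfl⟩ := mem_span_pair.mp hx
  simp only [map_add, map_smul, hd, hψ, smul_eq_mul, mul_one, add_zero,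
    smul_zero] at h0 h1
  simp [h1, show b = 0 by simpa [h1] using h0]

theorem Submodule.span_pair_sup_inf_ker (hd : ∀ x, d (d x) = 0) (hv : v ∈ U) (hdv : d v ∈ U)
    (hψ : ψ (d v) = 1) :
    span k {v, d v} ⊔ (U ⊓ LinearMap.ker ψ ⊓ LinearMap.ker (ψ ∘ₗ d)) = U := by
  refine le_antisymm (sup_le (span_le.mpr ?_) (inf_le_left.trans inf_le_left)) fun u hu => ?_
  · simp [Set.insert_subset_iff, hv, hdv]
  -- the unique `a • v + b • d v` with the same values as `u` under `ψ ∘ₗ d` and `ψ`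
  set a := ψ (d u)
  set b := ψ u - a * ψ v
  have hw : a • v + b • d v ∈ span k {v, d v} := mem_span_pair.mpr ⟨a, b, rfl⟩
  have hr : u - (a • v + b • d v) ∈ U ⊓ LinearMap.ker ψ ⊓ LinearMap.ker (ψ ∘ₗ d) := by
    simp only [mem_inf, LinearMap.mem_ker, LinearMap.comp_apply]
    refine ⟨⟨sub_mem hu (add_mem (smul_mem _ a hv) (smul_mem _ b hdv)), ?_⟩, ?_⟩
    · simp only [map_sub, map_add, map_smul, hψ, smul_eq_mul, b]; ring
    · simp only [map_sub, map_add, map_smul, hd, map_zero, hψ, smul_eq_mul, a]; ring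
  simpa using add_mem_sup hw hr

end Splitting

section Complex

variable {k V ι : Type*} [Field k] [AddCommGroup V] [Module k V]

def IsElementarySubcomplex (Vg : ι → Submodule k V) (d : V →ₗ[k] V) (W : Submodule k V) :
    Prop :=
  (∃ (p : ι) (v : V), v ≠ 0 ∧ v ∈ Vg p ∧ d v = 0 ∧ W = span k {v}) ∨
    (∃ (p : ι) (v : V), v ∈ Vg p ∧ d v ≠ 0 ∧ W = span k {v, d v})

theorem IsElementarySubcomplex.ne_bot {Vg : ι → Submodule k V} {d : V →ₗ[k] V}
    {W : Submodule k V} (hW : IsElementarySubcomplex Vg d W) : W ≠ ⊥ := by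
  rcases hW with ⟨p, v, hv, -, -, rfl⟩ | ⟨p, v, -, hdv, rfl⟩
  · simpa using hv
  · simp [hdv]

variable [DecidableEq ι] (Vg : ι → Submodule k V) [Decomposition Vg] (d : V →ₗ[k] V)

structure IsGradedSubcomplex (U : Submodule k V) : Prop where
  isHomogeneous : U.IsHomogeneous Vg
  mapsTo : ∀ u ∈ U, d u ∈ U

variable {Vg d} {σ : ι → ι} {U : Submodule k V}

namespace IsGradedSubcomplex

theorem exists_complement_span_pair (hσ : σ.Injective) (hd : ∀ x, d (d x) = 0)
    (hdeg : ∀ i, ∀ x ∈ Vg i, d x ∈ Vg (σ i)) (hU : IsGradedSubcomplex Vg d U) {p : ι} {v : V}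
    (hvU : v ∈ U) (hvp : v ∈ Vg p) (hdv : d v ≠ 0) :
    ∃ U', IsGradedSubcomplex Vg d U' ∧ Disjoint (span k {v, d v}) U' ∧
      span k {v, d v} ⊔ U' = U := by
  obtain ⟨g, hg⟩ := Module.Projective.exists_dual_eq_one k hdv
  set ψ := g ∘ₗ gradedProj Vg (σ p)
  have hψ : ψ (d v) = 1 := by simp [ψ, gradedProj_of_mem (hdeg p v hvp), hg]
  have hψd : ψ ∘ₗ d = (g ∘ₗ d) ∘ₗ gradedProj Vg p := by
    rw [LinearMap.comp_assoc, gradedProj_comp_of_injective hσ hdeg, LinearMap.comp_assoc]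
  refine ⟨U ⊓ LinearMap.ker ψ ⊓ LinearMap.ker (ψ ∘ₗ d), ⟨?_, ?_⟩,
    disjoint_span_pair_inf_ker hd hψ, span_pair_sup_inf_ker hd hvU (hU.mapsTo v hvU) hψ⟩
  · rw [hψd]
    exact (hU.isHomogeneous.inf_ker_comp_gradedProj g _).inf_ker_comp_gradedProj _ p
  · intro u hu
    simp only [mem_inf, LinearMap.mem_ker, LinearMap.comp_apply] at hu ⊢
    exact ⟨⟨hU.mapsTo u hu.1.1, hu.2⟩, by rw [hd, map_zero]⟩

theorem exists_complement_span_singleton (hU : IsGradedSubcomplex Vg d U) (hdU : ∀ u ∈ U, d u = 0)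
    {p : ι} {v : V} (hvU : v ∈ U) (hvp : v ∈ Vg p) (hv : v ≠ 0) :
    ∃ U', IsGradedSubcomplex Vg d U' ∧ Disjoint (span k {v}) U' ∧ span k {v} ⊔ U' = U := by
  obtain ⟨g, hg⟩ := Module.Projective.exists_dual_eq_one k hv
  set ψ := g ∘ₗ gradedProj Vg p
  have hψ : ψ v ≠ 0 := by simp [ψ, gradedProj_of_mem hvp, hg]
  refine ⟨U ⊓ LinearMap.ker ψ, ⟨hU.isHomogeneous.inf_ker_comp_gradedProj g p, ?_⟩,
    disjoint_span_singleton_inf_ker hψ, span_singleton_sup_inf_ker hvU hψ⟩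
  intro u hu
  rw [hdU u (mem_inf.mp hu).1]
  exact zero_mem _

theorem exists_elementary_complement (hσ : σ.Injective) (hd : ∀ x, d (d x) = 0)
    (hdeg : ∀ i, ∀ x ∈ Vg i, d x ∈ Vg (σ i)) (hU : IsGradedSubcomplex Vg d U) (hne : U ≠ ⊥) :
    ∃ B U', IsElementarySubcomplex Vg d B ∧ IsGradedSubcomplex Vg d U' ∧ Disjoint B U' ∧
      B ⊔ U' = U := by
  by_cases hcycle : ∀ p, ∀ v ∈ U, v ∈ Vg p → d v = 0
  · have hdU : ∀ u ∈ U, d u = 0 := fun u hu =>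
      hU.isHomogeneous.apply_eq_zero_of_forall_homogeneous hcycle hu
    obtain ⟨p, v, hvU, hvp, hv⟩ := hU.isHomogeneous.exists_homogeneous_mem_ne_zero hne
    obtain ⟨U', hU', hdisj, hsup⟩ := hU.exists_complement_span_singleton hdU hvU hvp hv
    exact ⟨_, U', .inl ⟨p, v, hv, hvp, hdU v hvU, rfl⟩, hU', hdisj, hsup⟩
  · push Not at hcycle
    obtain ⟨p, v, hvU, hvp, hdv⟩ := hcycle
    obtain ⟨U', hU', hdisj, hsup⟩ := hU.exists_complement_span_pair hσ hd hdeg hvU hvp hdv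
    exact ⟨_, U', .inr ⟨p, v, hvp, hdv, rfl⟩, hU', hdisj, hsup⟩

theorem isFinDirectSum [FiniteDimensional k V] (hσ : σ.Injective) (hd : ∀ x, d (d x) = 0)
    (hdeg : ∀ i, ∀ x ∈ Vg i, d x ∈ Vg (σ i)) (hU : IsGradedSubcomplex Vg d U) :
    U.IsFinDirectSum (IsElementarySubcomplex Vg d) := by
  induction U using WellFoundedLT.induction with
  | _ U ih =>
  rcases eq_or_ne U ⊥ with rfl | hne
  · exact .bot
  obtain ⟨B, U', hB, hU', hdisj, rfl⟩ := hU.exists_elementary_complement hσ hd hdeg hne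
  have hlt : U' < B ⊔ U' := right_lt_sup.mpr fun hle => hB.ne_bot (hdisj.eq_bot_of_le hle)
  exact .sup hB hdisj (ih U' hlt hU')

end IsGradedSubcomplex

end Complex

/-- Structure theory of `ℤ×ℤ/2`-graded ("half-graded") complexes with differential of
bidegree `(2, 1̄)` over a field `k`: every finite-dimensional such complex — a
finite-dimensional space `V` with an internal grading `Vg : ℤ × ZMod 2 → Submodule k V`
and a differential `d` with `d² = 0` mapping `Vg (a,b)` into `Vg (a+2, b+1)` —
decomposes as a direct sum of subcomplexes, each of which is either
(a) a line `span{v}` with `v` homogeneous and `d v = 0` (a single copy of `k` in some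
bidegree with zero differential), or
(b) a plane `span{v, d v}` with `v` homogeneous and `d v ≠ 0` (a two-term complex
`k⟨a⟩Π^b → k⟨a+2⟩Π^{b+1}` with differential a nonzero scalar).
(At the Grothendieck-group level this decomposition yields the ground ring
`ℤ[q,q⁻¹,π]/(π²−1, 1+q²π)`; only the structure theory is formalized here.) -/
theorem half_graded_complex_decomposition (k : Type*) [Field k]
    (V : Type*) [AddCommGroup V] [Module k V] [FiniteDimensional k V]
    (Vg : ℤ × ZMod 2 → Submodule k V)
    (hind : iSupIndep Vg) (hsup : iSup Vg = ⊤)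
    (d : V →ₗ[k] V) (hd2 : d ∘ₗ d = 0)
    (hdeg : ∀ p : ℤ × ZMod 2, ∀ v ∈ Vg p, d v ∈ Vg (p.1 + 2, p.2 + 1)) :
    ∃ (n : ℕ) (W : Fin n → Submodule k V),
      iSupIndep W ∧ iSup W = ⊤ ∧
      ∀ i, (∃ (p : ℤ × ZMod 2) (v : V), v ≠ 0 ∧ v ∈ Vg p ∧ d v = 0 ∧
              W i = Submodule.span k {v}) ∨
           (∃ (p : ℤ × ZMod 2) (v : V), v ∈ Vg p ∧ d v ≠ 0 ∧
              W i = Submodule.span k {v, d v}) := by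
  let _ : Decomposition Vg :=
    ((isInternal_submodule_iff_iSupIndep_and_iSup_eq_top Vg).mpr ⟨hind, hsup⟩).chooseDecomposition
  have hd : ∀ x, d (d x) = 0 := fun x => LinearMap.congr_fun hd2 x
  have htop : IsGradedSubcomplex Vg d ⊤ := ⟨fun _ _ _ => trivial, fun _ _ => trivial⟩
  exact htop.isFinDirectSum (add_left_injective ((2, 1) : ℤ × ZMod 2)) hd hdeg
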